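/- arXiv:2406.16401 — 4 statements merged into one kernel-verified Lean document; each statement's English description precedes it below -/
import Mathlib

section
/- For every permutation σ of {1,…,n}, the depth of σ, defined as the minimum over all factorizations σ = (i₁ j₁)(i₂ j₂)⋯(i_k j_k) into transpositions of the sum Σ_{r=1}^{k}(j_r − i_r), equals Σ_{i : σ(i) > i} (σ(i) − i). -/
/-!
Write `E σ = ∑ i, (σ i - i)⁺`. Since `σ (τ i) - i ≤ (σ (τ i) - τ i) + (τ i - i)`, `E` is
subadditive, and `E (swap a b) = b - a`; hence `E σ` is a lower bound for the cost of any
factorization. Conversely, if `σ ≠ 1`, take an excedance `a < σ a` with `σ a` maximal; counting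
shows some `b ∈ (a, σ a]` has `σ b ≤ a`, and then `E (σ * swap a b) = E σ - (b - a)`, so induction
on `E σ` produces a factorization of cost exactly `E σ`.
-/

open Finset

namespace Equiv.Perm

theorem eq_one_of_forall_apply_le {α : Type*} [LinearOrder α] [WellFoundedLT α]
    {σ : Equiv.Perm α} (h : ∀ i, σ i ≤ i) : σ = 1 := by
  ext i
  induction i using WellFoundedLT.induction with
  | ind i ih =>
    by_contra hne
    exact hne (σ.injective (ih (σ i) ((h i).lt_of_ne hne)))

theorem exists_crossing_pair {α : Type*} [LinearOrder α] [Fintype α]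
    [LocallyFiniteOrder α] {σ : Equiv.Perm α} (hσ : σ ≠ 1) :
    ∃ a b, a < b ∧ b ≤ σ a ∧ σ b ≤ a := by
  have hexc : (univ.filter fun i => i < σ i).Nonempty := by
    obtain ⟨i, hi⟩ : ∃ i, i < σ i := by
      by_contra! hle
      exact hσ (eq_one_of_forall_apply_le hle)
    exact ⟨i, mem_filter.mpr ⟨mem_univ i, hi⟩⟩
  obtain ⟨a, ha, hmax⟩ := exists_max_image _ σ hexc
  rw [mem_filter] at ha
  by_contra! hno
  have hmaps : (Ioc a (σ a)).image σ ⊆ Ioc a (σ a) := by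
    intro v hv
    obtain ⟨b, hb, rfl⟩ := mem_image.mp hv
    rw [mem_Ioc] at hb ⊢
    refine ⟨hno a b hb.1 hb.2, not_lt.mp fun hlt => ?_⟩
    exact (hmax b (by simpa using hb.2.trans_lt hlt)).not_gt hlt
  have himage : (Ioc a (σ a)).image σ = Ioc a (σ a) :=
    eq_of_subset_of_card_le hmaps (card_image_of_injective _ σ.injective).ge
  have hσa : σ a ∈ (Ioc a (σ a)).image σ := by rw [himage]; exact right_mem_Ioc.mpr ha.2
  obtain ⟨b, hb, hba⟩ := mem_image.mp hσa
  exact (mem_Ioc.mp hb).1.ne' (σ.injective hba)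

variable {n : ℕ}

/-- Truncated subtraction makes every `i` with `σ i ≤ i` contribute `0`. -/
def excedanceSum (σ : Equiv.Perm (Fin n)) : ℕ := ∑ i, ((σ i : ℕ) - i)

theorem excedanceSum_eq_sum_filter (σ : Equiv.Perm (Fin n)) :
    excedanceSum σ = ∑ i ∈ univ.filter (fun i : Fin n => i < σ i), ((σ i : ℕ) - i) := by
  rw [sum_filter]
  refine sum_congr rfl fun i _ => ?_
  split_ifs with h
  · rfl
  · exact Nat.sub_eq_zero_of_le (not_lt.mp h)

@[simp]
theorem excedanceSum_one : excedanceSum (1 : Equiv.Perm (Fin n)) = 0 := by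
  simp [excedanceSum]

theorem excedanceSum_swap {a b : Fin n} (hab : a < b) :
    excedanceSum (swap a b) = (b : ℕ) - a := by
  calc excedanceSum (swap a b) = ∑ i, if i = a then (b : ℕ) - a else 0 :=
        sum_congr rfl fun i _ => ?_
    _ = (b : ℕ) - a := by simp
  rcases eq_or_ne i a with rfl | hia
  · simp
  rcases eq_or_ne i b with rfl | hib
  · simp [hia, hab.le]
  · simp [swap_apply_of_ne_of_ne hia hib, hia]

theorem excedanceSum_mul_le (σ τ : Equiv.Perm (Fin n)) :
    excedanceSum (σ * τ) ≤ excedanceSum σ + excedanceSum τ := by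
  calc excedanceSum (σ * τ)
      ≤ ∑ i, (((σ (τ i) : ℕ) - τ i) + ((τ i : ℕ) - i)) :=
        sum_le_sum fun i _ => by simp only [mul_apply]; omega
    _ = excedanceSum σ + excedanceSum τ := by
        rw [sum_add_distrib, excedanceSum, excedanceSum, Equiv.sum_comp τ (fun k => (σ k : ℕ) - k)]

theorem excedanceSum_mul_swap {σ : Equiv.Perm (Fin n)} {a b : Fin n} (hab : a < b)
    (hb : b ≤ σ a) (hσb : σ b ≤ a) :
    excedanceSum σ = excedanceSum (σ * swap a b) + ((b : ℕ) - a) := by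
  -- Only the terms at `a` and `b` change: `σ a - a` and `0` become `σ b - a = 0` and `σ a - b`.
  have hpoint : ∀ i, ((σ i : ℕ) - i) + (if i = b then (σ a : ℕ) - b else 0) =
      (((σ * swap a b) i : ℕ) - i) + (if i = a then (σ a : ℕ) - a else 0) := by
    intro i
    have : (a : ℕ) < b ∧ (b : ℕ) ≤ σ a ∧ (σ b : ℕ) ≤ a := ⟨hab, hb, hσb⟩
    rcases eq_or_ne i a with rfl | hia
    · simp only [hab.ne, if_true, if_false, coe_mul, Function.comp_apply, swap_apply_left]
      omega
    rcases eq_or_ne i b with rfl | hib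
    · simp only [hia, if_true, if_false, coe_mul, Function.comp_apply, swap_apply_right]
      omega
    · simp [swap_apply_of_ne_of_ne hia hib, hia, hib]
  have hsum := sum_congr rfl fun i (_ : i ∈ univ) => hpoint i
  simp only [sum_add_distrib, sum_ite_eq', mem_univ, if_true] at hsum
  change excedanceSum σ + _ = excedanceSum (σ * swap a b) + _ at hsum
  have : (a : ℕ) < b ∧ (b : ℕ) ≤ σ a := ⟨hab, hb⟩
  omega

theorem excedanceSum_prod_le (L : List (Fin n × Fin n)) (hL : ∀ p ∈ L, p.1 < p.2) :
    excedanceSum (L.map fun p => swap p.1 p.2).prod ≤ (L.map fun p => (p.2 : ℕ) - p.1).sum := by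
  induction L with
  | nil => simp
  | cons p L ih =>
    simp only [List.map_cons, List.prod_cons, List.sum_cons]
    calc _ ≤ excedanceSum (swap p.1 p.2) + excedanceSum (L.map fun p => swap p.1 p.2).prod :=
          excedanceSum_mul_le _ _
      _ ≤ _ := by
          rw [excedanceSum_swap (hL p List.mem_cons_self)]
          exact Nat.add_le_add_left (ih fun q hq => hL q (List.mem_cons_of_mem p hq)) _

theorem exists_swap_factorization_cost_eq_excedanceSum (σ : Equiv.Perm (Fin n)) :
    ∃ L : List (Fin n × Fin n), (∀ p ∈ L, p.1 < p.2) ∧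
      σ = (L.map fun p => swap p.1 p.2).prod ∧
      (L.map fun p => (p.2 : ℕ) - p.1).sum = excedanceSum σ := by
  induction hE : excedanceSum σ using Nat.strong_induction_on generalizing σ with
  | _ E ih =>
    by_cases hσ : σ = 1
    · exact ⟨[], by simp, by simp [hσ], by simp [← hE, hσ]⟩
    obtain ⟨a, b, hab, hb, hσb⟩ := exists_crossing_pair hσ
    have hsplit := excedanceSum_mul_swap hab hb hσb
    obtain ⟨L, hL, hprod, hcost⟩ :=
      ih _ (by have : (a : ℕ) < b := hab; omega) (σ * swap a b) rfl
    refine ⟨L ++ [(a, b)], ?_, ?_, ?_⟩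
    · rintro p hp
      rcases List.mem_append.mp hp with hp | hp
      · exact hL p hp
      · rw [List.mem_singleton.mp hp]; exact hab
    · simp [← hprod, mul_assoc]
    · simp only [List.map_append, List.sum_append, hcost, List.map_singleton, List.sum_singleton]
      omega

end Equiv.Perm


/-- The depth of a permutation of `Fin n`, defined as the minimum cost
`∑ (j_r - i_r)` over all factorizations into transpositions `(i_r j_r)` with
`i_r < j_r`, equals `∑_{i : σ i > i} (σ i - i)`. -/
theorem depth_formula {n : ℕ} (σ : Equiv.Perm (Fin n)) :
    sInf {c : ℕ | ∃ L : List (Fin n × Fin n),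
        (∀ p ∈ L, p.1 < p.2) ∧
        σ = (L.map fun p => Equiv.swap p.1 p.2).prod ∧
        c = (L.map fun p => (p.2 : ℕ) - (p.1 : ℕ)).sum} =
    ∑ i ∈ Finset.univ.filter (fun i : Fin n => i < σ i), ((σ i : ℕ) - (i : ℕ)) := by
  rw [← Equiv.Perm.excedanceSum_eq_sum_filter]
  obtain ⟨L, hL, hprod, hcost⟩ := Equiv.Perm.exists_swap_factorization_cost_eq_excedanceSum σ
  refine IsLeast.csInf_eq ⟨⟨L, hL, hprod, hcost.symm⟩, ?_⟩
  rintro c ⟨L', hL', rfl, rfl⟩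
  exact Equiv.Perm.excedanceSum_prod_le L' hL'
end

section
/- For every n ≥ 1, Σ_{σ ∈ 𝔖_n} (−1)^{inv(σ)} s^{exc(σ)} t^{depth(σ)} = (1 − st)^{n−1} as polynomials in s and t. -/
/-- Number of excedances of a permutation. -/
def excN {n : ℕ} (σ : Equiv.Perm (Fin n)) : ℕ :=
  (Finset.univ.filter fun i : Fin n => i < σ i).card

/-- Depth of a permutation: `∑_{i : σ i > i} (σ i - i)`. -/
def depthN {n : ℕ} (σ : Equiv.Perm (Fin n)) : ℕ :=
  ∑ i ∈ Finset.univ.filter (fun i : Fin n => i < σ i), ((σ i : ℕ) - (i : ℕ))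

/-- Number of inversions of a permutation. -/
def invN {n : ℕ} (σ : Equiv.Perm (Fin n)) : ℕ :=
  (Finset.univ.filter fun p : Fin n × Fin n => p.1 < p.2 ∧ σ p.2 < σ p.1).card
/-!
The signed sum is the permutation expansion of the determinant of the matrix with entries
`s * t ^ (j - i)` above the diagonal and `1` on and below it. Subtracting from each row the one
above it makes this matrix upper triangular with diagonal `1, 1 - s t, …, 1 - s t`.
-/

open Finset Equiv Equiv.Perm Matrix

theorem sign_eq_neg_one_pow_invN {n : ℕ} (σ : Perm (Fin n)) :
    sign σ = (-1 : ℤˣ) ^ invN σ := by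
  have hinv : invN σ = ∑ j, #((Iio j).filter fun i => σ j < σ i) := by
    simp only [invN, card_filter, Fintype.sum_prod_type, ite_and, ← filter_gt_eq_Iio, sum_filter]
    exact sum_comm
  rw [sign_eq_prod_prod_Iio, hinv, ← prod_pow_eq_pow_sum]
  refine prod_congr rfl fun j _ => ?_
  rw [card_filter, ← prod_pow_eq_pow_sum]
  refine prod_congr rfl fun i hi => ?_
  have hij : σ i ≠ σ j := σ.injective.ne (mem_Iio.1 hi).ne
  rcases hij.lt_or_gt with h | h <;> simp [h, h.not_gt]

theorem det_eq_prod_one_sub_of_forall_le_eq_one {R : Type*} [CommRing R] {m : ℕ}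
    (A : Matrix (Fin (m + 1)) (Fin (m + 1)) R) (hA : ∀ i j, j ≤ i → A i j = 1) :
    A.det = ∏ i : Fin m, (1 - A i.castSucc i.succ) := by
  let B : Matrix (Fin (m + 1)) (Fin (m + 1)) R :=
    of fun i j => Fin.cases (A 0 j) (fun i => A i.succ j - A i.castSucc j) i
  have hAB : A.det = B.det :=
    det_eq_of_forall_row_eq_smul_add_pred (fun _ => 1) (fun _ => rfl) fun i j => by simp [B]
  have hB : B.IsUpperTriangular := by
    intro i j hji
    induction i using Fin.cases with
    | zero => exact absurd hji (Fin.not_lt_zero j)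
    | succ i =>
      have hj : j ≤ i.castSucc := Fin.le_castSucc_iff.2 hji
      simp [B, hA _ _ hj, hA _ _ (hj.trans (Fin.castSucc_le_succ i))]
  rw [hAB, det_of_isUpperTriangular hB, Fin.prod_univ_succ]
  simp [B, hA]

section ExcedanceMatrix

variable {R : Type*} [CommRing R] {n : ℕ} (s t : R)

def excedanceMatrix (n : ℕ) : Matrix (Fin n) (Fin n) R :=
  of fun i j => if i < j then s * t ^ ((j : ℕ) - i) else 1

theorem prod_excedanceMatrix_apply_perm (σ : Perm (Fin n)) :
    ∏ i, excedanceMatrix s t n i (σ i) = s ^ excN σ * t ^ depthN σ := by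
  rw [← prod_filter_mul_prod_filter_not univ fun i => i < σ i]
  have hexc : ∏ i ∈ univ.filter (fun i => i < σ i), excedanceMatrix s t n i (σ i) =
      ∏ i ∈ univ.filter (fun i => i < σ i), s * t ^ ((σ i : ℕ) - i) :=
    prod_congr rfl fun i hi => if_pos (mem_filter.1 hi).2
  have hrest : ∏ i ∈ univ.filter (fun i => ¬ i < σ i), excedanceMatrix s t n i (σ i) = 1 :=
    prod_eq_one fun i hi => if_neg (mem_filter.1 hi).2
  rw [hexc, hrest, mul_one, prod_mul_distrib, prod_const, prod_pow_eq_pow_sum]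
  rfl

theorem det_excedanceMatrix (m : ℕ) : (excedanceMatrix s t (m + 1)).det = (1 - s * t) ^ m := by
  rw [det_eq_prod_one_sub_of_forall_le_eq_one (excedanceMatrix s t (m + 1))
    fun i j hji => if_neg hji.not_gt]
  simp [excedanceMatrix]

end ExcedanceMatrix

open MvPolynomial in
/-- In `ℤ[s,t]` we take `s = X 0` and `t = X 1`. -/
theorem sign_imbalance_permutations (n : ℕ) (hn : 1 ≤ n) :
    ∑ σ : Equiv.Perm (Fin n),
        (C ((-1 : ℤ) ^ invN σ) * X 0 ^ excN σ * X 1 ^ depthN σ :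
          MvPolynomial (Fin 2) ℤ) =
      (1 - X 0 * X 1) ^ (n - 1) := by
  obtain ⟨m, rfl⟩ := Nat.exists_eq_add_of_le' hn
  rw [Nat.add_sub_cancel, ← det_excedanceMatrix, ← det_transpose, det_apply']
  refine sum_congr rfl fun σ _ => ?_
  simp only [transpose_apply, prod_excedanceMatrix_apply_perm, sign_eq_neg_one_pow_invN]
  simp [mul_assoc]
end

section
/- For every permutation σ ∈ 𝔖_n, exc(σ) ≤ depth(σ) ≤ inv(σ). -/
/-!
An excedance `i < σ i` contributes `σ i - i ≥ 1` to the depth. For the second inequality, exactly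
`σ i` positions `j` have `σ j < σ i` (values are counted from `0`), and at most `i` of them lie to
the left of `i`; so at least `σ i - i` of them give inversions `(i, j)` with `i < j`. Summing over
`i` counts every inversion once.
-/

open Finset

namespace Equiv.Perm

variable {n : ℕ} (σ : Equiv.Perm (Fin n))

theorem card_filter_apply_lt (i : Fin n) : #{j | σ j < σ i} = σ i := by
  rw [← Fin.card_Iio]
  exact card_nbij' σ σ.symm (fun j hj => by simpa using hj) (fun v hv => by simpa using hv)
    (fun j _ => by simp) (fun v _ => by simp)

theorem apply_sub_le_card_inversions_from (i : Fin n) :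
    (σ i : ℕ) - i ≤ #{j | i < j ∧ σ j < σ i} := by
  have hsplit : ({j | σ j < σ i} : Finset (Fin n)) ⊆
      Iio i ∪ ({j | i < j ∧ σ j < σ i} : Finset (Fin n)) := by
    intro j hj
    simp only [mem_filter, mem_univ, true_and] at hj
    rcases lt_or_gt_of_ne (fun h : j = i => (h ▸ hj).false) with h | h
    · exact mem_union_left _ (mem_Iio.mpr h)
    · exact mem_union_right _ (by simp [h, hj])
  have := (card_le_card hsplit).trans (card_union_le _ _)
  rw [card_filter_apply_lt, Fin.card_Iio] at this
  omega

theorem invN_eq_sum_card_inversions_from :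
    invN σ = ∑ i, #{j | i < j ∧ σ j < σ i} := by
  rw [invN, card_filter, Fintype.sum_prod_type]
  simp only [card_filter]

theorem excN_le_depthN : excN σ ≤ depthN σ := by
  rw [excN, card_eq_sum_ones]
  refine sum_le_sum fun i hi => ?_
  have : (i : ℕ) < σ i := (mem_filter.mp hi).2
  omega

theorem depthN_le_invN : depthN σ ≤ invN σ :=
  calc depthN σ ≤ ∑ i, ((σ i : ℕ) - i) := sum_le_sum_of_subset (filter_subset _ _)
    _ ≤ ∑ i, #{j | i < j ∧ σ j < σ i} :=
        sum_le_sum fun i _ => σ.apply_sub_le_card_inversions_from i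
    _ = invN σ := (σ.invN_eq_sum_card_inversions_from).symm

end Equiv.Perm

/-- `exc σ ≤ depth σ ≤ inv σ` for every permutation `σ`. -/
theorem exc_le_depth_le_inv {n : ℕ} (σ : Equiv.Perm (Fin n)) :
    excN σ ≤ depthN σ ∧ depthN σ ≤ invN σ :=
  ⟨σ.excN_le_depthN, σ.depthN_le_invN⟩
end

section
/- For every n ≥ 1, the polynomial identity Σ_{σ ∈ 𝔖_n} (−1)^{inv(σ)} t^{depth(σ)} = (1 − t)^{n−1} holds (specialization s = 1 of Theorem 1.3). -/
/-!
The sum is the Leibniz expansion of `det (t ^ (i ∸ j))_{i,j < n}`: truncated subtraction makes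
`∏ i, t ^ (σ i ∸ i)` equal to `t ^ depth σ`, and `(-1) ^ inv σ` is the sign of `σ`.
Subtracting `t` times row `i` from row `i + 1` turns this matrix into an upper triangular one
with diagonal `1, 1 - t, …, 1 - t`.
-/

open Finset Matrix

namespace Equiv.Perm

variable {n : ℕ}

theorem sign_eq_neg_one_pow_invN (σ : Perm (Fin n)) : sign σ = (-1) ^ invN σ := by
  have h_row (i : Fin n) : ∏ j ∈ Ioi i, (if σ i < σ j then 1 else -1 : ℤˣ) =
      ∏ j, if i < j ∧ σ j < σ i then -1 else 1 := by
    rw [← filter_lt_eq_Ioi, prod_filter]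
    refine prod_congr rfl fun j _ => ?_
    have : σ i ≠ σ j ↔ i ≠ j := σ.injective.ne_iff
    split_ifs <;> grind
  rw [σ.sign_eq_prod_prod_Ioi, prod_congr rfl fun i _ => h_row i, ← Fintype.prod_prod_type',
    prod_ite, prod_const, prod_const_one, mul_one, invN]

theorem prod_pow_tsub_eq_pow_depthN {M : Type*} [CommMonoid M] (σ : Perm (Fin n)) (x : M) :
    ∏ i, x ^ ((σ i : ℕ) - i) = x ^ depthN σ := by
  rw [prod_pow_eq_pow_sum, depthN, sum_filter_of_ne]
  intro i _ h
  by_contra hi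
  exact h (Nat.sub_eq_zero_of_le (by simpa using hi))

end Equiv.Perm

theorem Matrix.det_of_pow_tsub {R : Type*} [CommRing R] (x : R) (n : ℕ) :
    det (of fun i j : Fin n => x ^ ((i : ℕ) - j)) = (1 - x) ^ (n - 1) := by
  rcases n with _ | m
  · simp
  let U : Matrix (Fin (m + 1)) (Fin (m + 1)) R :=
    of fun i j => if j < i then 0 else if i = 0 then 1 else 1 - x
  have hU : U.IsUpperTriangular := fun i j hij => if_pos hij
  calc det (of fun i j : Fin (m + 1) => x ^ ((i : ℕ) - j))
      = det U := by
        refine det_eq_of_forall_row_eq_smul_add_pred (fun _ => x) (fun j => by simp [U])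
          fun i j => ?_
        simp only [of_apply, U, Fin.val_succ, Fin.val_castSucc, Fin.succ_ne_zero, if_false]
        split_ifs with h <;> rw [Fin.lt_def, Fin.val_succ] at h
        · rw [zero_add, ← pow_succ']
          congr 1
          omega
        · rw [Nat.sub_eq_zero_of_le (by omega), Nat.sub_eq_zero_of_le (by omega)]
          ring
    _ = (1 - x) ^ (m + 1 - 1) := by
        rw [det_of_isUpperTriangular hU, Fin.prod_univ_succ]
        simp [U]

open Polynomial in
theorem sign_imbalance_depth_general (n : ℕ) :
    ∑ σ : Equiv.Perm (Fin n), (C ((-1 : ℤ) ^ invN σ) * X ^ depthN σ : Polynomial ℤ) =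
      (1 - X) ^ (n - 1) := by
  rw [← det_of_pow_tsub, det_apply]
  refine sum_congr rfl fun σ _ => ?_
  simp only [of_apply, σ.prod_pow_tsub_eq_pow_depthN, σ.sign_eq_neg_one_pow_invN, Units.smul_def]
  simp

open Polynomial in
/-- `∑_σ (−1)^{inv σ} t^{depth σ} = (1 − t)^{n−1}` in `ℤ[t]`. -/
theorem sign_imbalance_depth (n : ℕ) (hn : 1 ≤ n) :
    ∑ σ : Equiv.Perm (Fin n), (C ((-1 : ℤ) ^ invN σ) * X ^ depthN σ : Polynomial ℤ) =
      (1 - X) ^ (n - 1) :=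
  sign_imbalance_depth_general n
end
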